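/- Let m ≥ 2, let n = 2m, let Fₙ be the free group on x₁, ..., xₙ, let r = [x₁, x₂]·[x₃, x₄]···[x₂ₘ₋₁, x₂ₘ] (where [x, y] = x⁻¹y⁻¹xy), let R be the normal closure of r in Fₙ, and set t = [x₂, x₁]·r·[x₂, x₁]⁻¹. Then the endomorphism ψₒ of Fₙ determined by ψₒ(x₁) = t·x₁, ψₒ(x₂) = t·x₂·t⁻¹, and ψₒ(xᵢ) = xᵢ for i ≠ 1, 2, is an automorphism of Fₙ; it is not an inner automorphism; it satisfies ψₒ(R) = R; and it induces the identity automorphism of Fₙ/R, i.e., w⁻¹·ψₒ(w) ∈ R for every w ∈ Fₙ. -/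
import Mathlib

/-- The word r = [x₁,x₂]·[x₃,x₄]⋯[x₂ₘ₋₁,x₂ₘ] (with [x,y] = x⁻¹y⁻¹xy) in the free
group of rank n = 2m. -/
def rOrient (m : ℕ) : FreeGroup (Fin (2 * m)) :=
  (List.ofFn fun k : Fin m =>
    (FreeGroup.of (⟨2 * k.1, by have := k.2; omega⟩ : Fin (2 * m)))⁻¹ *
    (FreeGroup.of (⟨2 * k.1 + 1, by have := k.2; omega⟩ : Fin (2 * m)))⁻¹ *
    FreeGroup.of (⟨2 * k.1, by have := k.2; omega⟩ : Fin (2 * m)) *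
    FreeGroup.of (⟨2 * k.1 + 1, by have := k.2; omega⟩ : Fin (2 * m))).prod

/-- The element [x₂,x₁] = x₂⁻¹x₁⁻¹x₂x₁ of the free group of rank 2m (m ≥ 1). -/
def comm21 (m : ℕ) (hm : 1 ≤ m) : FreeGroup (Fin (2 * m)) :=
  (FreeGroup.of (⟨1, by omega⟩ : Fin (2 * m)))⁻¹ *
    (FreeGroup.of (⟨0, by omega⟩ : Fin (2 * m)))⁻¹ *
    FreeGroup.of (⟨1, by omega⟩ : Fin (2 * m)) *
    FreeGroup.of (⟨0, by omega⟩ : Fin (2 * m))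

/-- for m ≥ 2, n = 2m, r = [x₁,x₂]·[x₃,x₄]⋯[x₂ₘ₋₁,x₂ₘ], R the normal
closure of r and t = [x₂,x₁]·r·[x₂,x₁]⁻¹, the endomorphism ψₒ of Fₙ with
ψₒ(x₁) = t·x₁, ψₒ(x₂) = t·x₂·t⁻¹ and ψₒ(xᵢ) = xᵢ for i ≠ 1, 2, is a non-inner
automorphism of Fₙ which stabilizes R and induces the identity automorphism
of Fₙ/R. -/
theorem stmt9 (m : ℕ) (hm : 2 ≤ m)
    (ψ : FreeGroup (Fin (2 * m)) →* FreeGroup (Fin (2 * m)))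
    (t : FreeGroup (Fin (2 * m)))
    (ht : t = comm21 m (by omega) * rOrient m * (comm21 m (by omega))⁻¹)
    (hψ1 : ψ (FreeGroup.of ⟨0, by omega⟩) =
      t * FreeGroup.of (⟨0, by omega⟩ : Fin (2 * m)))
    (hψ2 : ψ (FreeGroup.of ⟨1, by omega⟩) =
      t * FreeGroup.of (⟨1, by omega⟩ : Fin (2 * m)) * t⁻¹)
    (hψi : ∀ i : Fin (2 * m), i ≠ ⟨0, by omega⟩ → i ≠ ⟨1, by omega⟩ →
      ψ (FreeGroup.of i) = FreeGroup.of i) :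
    Function.Bijective ψ ∧
    (¬ ∃ g : FreeGroup (Fin (2 * m)), ∀ w : FreeGroup (Fin (2 * m)), ψ w = g * w * g⁻¹) ∧
    Subgroup.map ψ (Subgroup.normalClosure {rOrient m}) =
      Subgroup.normalClosure {rOrient m} ∧
    (∀ w : FreeGroup (Fin (2 * m)),
      w⁻¹ * ψ w ∈ Subgroup.normalClosure {rOrient m}) := by
  obtain ⟨m', rfl⟩ : ∃ m', m = m' + 2 := ⟨m - 2, by omega⟩
  -- abbreviations
  obtain ⟨X, hX⟩ : ∃ X, X = FreeGroup.of (⟨0, by omega⟩ : Fin (2 * (m' + 2))) := ⟨_, rfl⟩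
  obtain ⟨Y, hY⟩ : ∃ Y, Y = FreeGroup.of (⟨1, by omega⟩ : Fin (2 * (m' + 2))) := ⟨_, rfl⟩
  obtain ⟨s, hs⟩ : ∃ s, s =
      (List.ofFn fun k : Fin (m' + 1) =>
        (FreeGroup.of (⟨2 * (k.1 + 1), by have := k.2; omega⟩ : Fin (2 * (m' + 2))))⁻¹ *
        (FreeGroup.of (⟨2 * (k.1 + 1) + 1, by have := k.2; omega⟩ : Fin (2 * (m' + 2))))⁻¹ *
        FreeGroup.of (⟨2 * (k.1 + 1), by have := k.2; omega⟩ : Fin (2 * (m' + 2))) *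
        FreeGroup.of (⟨2 * (k.1 + 1) + 1, by have := k.2; omega⟩ : Fin (2 * (m' + 2)))).prod :=
    ⟨_, rfl⟩
  have hne : ∀ (i : Fin (2 * (m' + 2))) (k : ℕ) (hk : k < 2 * (m' + 2)),
      i.1 ≠ k → i ≠ ⟨k, hk⟩ := fun i k hk h hh => h (by rw [hh])
  have hr : rOrient (m' + 2) = (X⁻¹ * Y⁻¹ * X * Y) * s := by
    rw [rOrient, hX, hY, hs, List.ofFn_succ, List.prod_cons]
    refine congr_arg₂ (· * ·) (by norm_num)
      (congrArg List.prod (congrArg List.ofFn (funext fun k => ?_)))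
    simp [Fin.val_succ]
  have hc : ∀ h, comm21 (m' + 2) h = Y⁻¹ * X⁻¹ * Y * X := by
    intro h; rw [comm21, hX, hY]
  have ht' : t = s * (X⁻¹ * Y⁻¹ * X * Y) := by
    rw [ht, hc, hr]; group
  have hψX : ψ X = t * X := by rw [hX]; exact hψ1
  have hψY : ψ Y = t * Y * t⁻¹ := by rw [hY]; exact hψ2
  have hψs : ψ s = s := by
    rw [hs, map_list_prod, List.map_ofFn]
    refine congrArg List.prod (congrArg List.ofFn (funext fun k => ?_))
    simp only [Function.comp_apply, map_mul, map_inv]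
    rw [hψi _ (hne _ _ _ (by simp)) (hne _ _ _ (by simp)),
      hψi _ (hne _ _ _ (by simp)) (hne _ _ _ (by simp))]
  have hψt : ψ t = ψ t := rfl
  -- the inverse endomorphism
  obtain ⟨u, hu⟩ : ∃ u, u = X⁻¹ * Y * X * s⁻¹ * Y⁻¹ * X := ⟨_, rfl⟩
  obtain ⟨v, hv⟩ : ∃ v, v = X⁻¹ * Y * X * s⁻¹ * Y * s * X⁻¹ * Y⁻¹ * X := ⟨_, rfl⟩
  obtain ⟨φ, hφ⟩ : ∃ φ : FreeGroup (Fin (2 * (m' + 2))) →* FreeGroup (Fin (2 * (m' + 2))),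
      φ = FreeGroup.lift fun i => if i.1 = 0 then u else if i.1 = 1 then v
        else FreeGroup.of i := ⟨_, rfl⟩
  have hφX : φ X = u := by rw [hφ, hX, FreeGroup.lift_apply_of]; norm_num
  have hφY : φ Y = v := by rw [hφ, hY, FreeGroup.lift_apply_of]; norm_num
  have hφi : ∀ i : Fin (2 * (m' + 2)), i.1 ≠ 0 → i.1 ≠ 1 →
      φ (FreeGroup.of i) = FreeGroup.of i := by
    intro i h0 h1
    rw [hφ, FreeGroup.lift_apply_of, if_neg h0, if_neg h1]
  have hφs : φ s = s := by
    rw [hs, map_list_prod, List.map_ofFn]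
    refine congrArg List.prod (congrArg List.ofFn (funext fun k => ?_))
    simp only [Function.comp_apply, map_mul, map_inv]
    rw [hφi _ (by simp) (by simp), hφi _ (by simp) (by simp)]
  have hφt : φ t = s * (u⁻¹ * v⁻¹ * u * v) := by
    rw [ht']
    simp only [map_mul, map_inv, hφs, hφX, hφY]
  have hcomp1 : φ.comp ψ = MonoidHom.id _ := by
    apply FreeGroup.ext_hom
    intro i
    simp only [MonoidHom.comp_apply, MonoidHom.id_apply]
    by_cases h0 : i.1 = 0
    · have hiX : FreeGroup.of i = X := by rw [hX]; congr 1; exact Fin.ext h0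
      rw [hiX, hψX, map_mul, hφt, hφX, hu, hv]
      group
    · by_cases h1 : i.1 = 1
      · have hiY : FreeGroup.of i = Y := by rw [hY]; congr 1; exact Fin.ext h1
        rw [hiY, hψY, map_mul, map_mul, map_inv, hφt, hφY, hu, hv]
        group
      · rw [hψi i (hne _ _ _ h0) (hne _ _ _ h1), hφi i h0 h1]
  have hcomp2 : ψ.comp φ = MonoidHom.id _ := by
    apply FreeGroup.ext_hom
    intro i
    simp only [MonoidHom.comp_apply, MonoidHom.id_apply]
    by_cases h0 : i.1 = 0
    · have hiX : FreeGroup.of i = X := by rw [hX]; congr 1; exact Fin.ext h0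
      rw [hiX, hφX, hu]
      simp only [map_mul, map_inv, hψX, hψY, hψs]
      rw [ht']
      group
    · by_cases h1 : i.1 = 1
      · have hiY : FreeGroup.of i = Y := by rw [hY]; congr 1; exact Fin.ext h1
        rw [hiY, hφY, hv]
        simp only [map_mul, map_inv, hψX, hψY, hψs]
        rw [ht']
        group
      · rw [hφi i h0 h1, hψi i (hne _ _ _ h0) (hne _ _ _ h1)]
  have hl : Function.LeftInverse φ ψ := fun w => by
    rw [← MonoidHom.comp_apply, hcomp1, MonoidHom.id_apply]
  have hri : Function.RightInverse φ ψ := fun w => by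
    rw [← MonoidHom.comp_apply, hcomp2, MonoidHom.id_apply]
  -- membership of t in R
  have htR : t ∈ Subgroup.normalClosure {rOrient (m' + 2)} := by
    rw [ht]
    exact Subgroup.Normal.conj_mem (Subgroup.normalClosure_normal)
      _ (Subgroup.subset_normalClosure (Set.mem_singleton _)) _
  -- Statement 4 : identity on the quotient
  have hπ : (QuotientGroup.mk' (Subgroup.normalClosure {rOrient (m' + 2)})).comp ψ =
      QuotientGroup.mk' (Subgroup.normalClosure {rOrient (m' + 2)}) := by
    apply FreeGroup.ext_hom
    intro i
    simp only [MonoidHom.comp_apply]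
    have ht1 : (QuotientGroup.mk' (Subgroup.normalClosure {rOrient (m' + 2)})) t = 1 :=
      (QuotientGroup.eq_one_iff t).mpr htR
    by_cases h0 : i.1 = 0
    · have hiX : FreeGroup.of i = X := by rw [hX]; congr 1; exact Fin.ext h0
      rw [hiX, hψX, map_mul, ht1, one_mul]
    · by_cases h1 : i.1 = 1
      · have hiY : FreeGroup.of i = Y := by rw [hY]; congr 1; exact Fin.ext h1
        rw [hiY, hψY, map_mul, map_mul, map_inv, ht1, one_mul, inv_one, mul_one]
      · rw [hψi i (hne _ _ _ h0) (hne _ _ _ h1)]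
  have h4 : ∀ w : FreeGroup (Fin (2 * (m' + 2))),
      w⁻¹ * ψ w ∈ Subgroup.normalClosure {rOrient (m' + 2)} := by
    intro w
    have hw : (QuotientGroup.mk' (Subgroup.normalClosure {rOrient (m' + 2)})) (ψ w) =
        (QuotientGroup.mk' (Subgroup.normalClosure {rOrient (m' + 2)})) w :=
      DFunLike.congr_fun hπ w
    have : (QuotientGroup.mk' (Subgroup.normalClosure {rOrient (m' + 2)})) (w⁻¹ * ψ w) = 1 := by
      rw [map_mul, map_inv, hw, inv_mul_cancel]
    exact (QuotientGroup.eq_one_iff _).mp this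
  refine ⟨⟨hl.injective, hri.surjective⟩, ?_, ?_, h4⟩
  · -- not inner
    rintro ⟨g, hg⟩
    obtain ⟨A, hA⟩ : ∃ A : (Matrix (Fin 2) (Fin 2) ℤ)ˣ,
        A = Units.mk !![1, 2; 0, 1] !![1, -2; 0, 1]
          (by decide) (by decide) := ⟨_, rfl⟩
    obtain ⟨B, hB⟩ : ∃ B : (Matrix (Fin 2) (Fin 2) ℤ)ˣ,
        B = Units.mk !![1, 0; 2, 1] !![1, 0; -2, 1]
          (by decide) (by decide) := ⟨_, rfl⟩
    obtain ⟨ρ, hρof⟩ : ∃ ρ : FreeGroup (Fin (2 * (m' + 2))) →* (Matrix (Fin 2) (Fin 2) ℤ)ˣ,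
        ∀ i : Fin (2 * (m' + 2)), ρ (FreeGroup.of i) =
          if i.1 = 2 then A else if i.1 = 3 then B else 1 :=
      ⟨FreeGroup.lift fun i => if i.1 = 2 then A else if i.1 = 3 then B else 1,
        fun i => FreeGroup.lift_apply_of⟩
    have hρX : ρ X = 1 := by rw [hX, hρof]; simp
    have hρY : ρ Y = 1 := by rw [hY, hρof]; simp
    have hρs : ρ s = A⁻¹ * B⁻¹ * A * B := by
      rw [hs, map_list_prod, List.map_ofFn, List.ofFn_succ, List.prod_cons]
      have hhead : ρ ((FreeGroup.of (⟨2 * ((0 : Fin (m' + 1)).1 + 1), by omega⟩ :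
          Fin (2 * (m' + 2))))⁻¹ *
          (FreeGroup.of (⟨2 * ((0 : Fin (m' + 1)).1 + 1) + 1, by omega⟩ :
            Fin (2 * (m' + 2))))⁻¹ *
          FreeGroup.of (⟨2 * ((0 : Fin (m' + 1)).1 + 1), by omega⟩ : Fin (2 * (m' + 2))) *
          FreeGroup.of (⟨2 * ((0 : Fin (m' + 1)).1 + 1) + 1, by omega⟩ :
            Fin (2 * (m' + 2)))) = A⁻¹ * B⁻¹ * A * B := by
        simp only [map_mul, map_inv, hρof, Fin.val_mk, Fin.val_zero]
        norm_num
      have htail : (List.ofFn fun k : Fin m' => (ρ ∘ fun k : Fin (m' + 1) =>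
          (FreeGroup.of (⟨2 * (k.1 + 1), by have := k.2; omega⟩ : Fin (2 * (m' + 2))))⁻¹ *
          (FreeGroup.of (⟨2 * (k.1 + 1) + 1, by have := k.2; omega⟩ : Fin (2 * (m' + 2))))⁻¹ *
          FreeGroup.of (⟨2 * (k.1 + 1), by have := k.2; omega⟩ : Fin (2 * (m' + 2))) *
          FreeGroup.of (⟨2 * (k.1 + 1) + 1, by have := k.2; omega⟩ : Fin (2 * (m' + 2))))
            k.succ).prod = 1 := by
        apply List.prod_eq_one
        intro x hx
        rw [List.mem_ofFn] at hx
        obtain ⟨k, rfl⟩ := hx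
        simp only [Function.comp_apply, map_mul, map_inv, hρof, Fin.val_mk, Fin.val_succ]
        rw [if_neg (by omega), if_neg (by omega), if_neg (by omega), if_neg (by omega)]
        group
      rw [htail, mul_one]
      exact hhead
    have hρt : ρ t = A⁻¹ * B⁻¹ * A * B := by
      rw [ht']
      simp only [map_mul, map_inv, hρs, hρX, hρY]
      group
    have hone : A⁻¹ * B⁻¹ * A * B = 1 := by
      calc A⁻¹ * B⁻¹ * A * B = ρ t * ρ X := by rw [hρX, hρt, mul_one]
        _ = ρ g * ρ X * (ρ g)⁻¹ := by
            rw [← map_mul, ← hψX, hg X, map_mul, map_mul, map_inv]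
        _ = 1 := by rw [hρX, mul_one]; group
    rw [hA, hB] at hone
    have h' := congrArg Units.val hone
    revert h'
    decide
  · -- ψ R = R
    apply le_antisymm
    · rintro y ⟨x, hx, rfl⟩
      have hxy : ψ x = x * (x⁻¹ * ψ x) := by group
      rw [hxy]
      exact mul_mem hx (h4 x)
    · intro y hy
      refine ⟨φ y, ?_, hri y⟩
      have h := h4 (φ y)
      rw [hri y] at h
      have : φ y = y * ((φ y)⁻¹ * y)⁻¹ := by group
      rw [this]
      exact mul_mem hy (inv_mem h)
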